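/- Let H be the graph on vertices {u, v, w, a, b, c} with edges: two parallel edges between v and w, the edge cw, edges ua, ub, uc, and edges av, bv. Then L(H) has a K_5-minor but no K_5-immersion. -/

import Mathlib

/-- A multigraph: a type of vertices, a type of edges, an endpoints map,
and no loops. Parallel edges are allowed. -/
structure MG : Type 1 where
  V : Type
  E : Type
  ends : E → Sym2 V
  noLoop : ∀ e, ¬ (ends e).IsDiag

namespace MG

/-- Two vertices are adjacent if some edge joins them. -/
def Adjv (G : MG) (x y : G.V) : Prop := ∃ e, G.ends e = s(x, y)

/-- Isomorphism of multigraphs. -/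
def Iso (G H : MG) : Prop :=
  ∃ (fv : G.V ≃ H.V) (fe : G.E ≃ H.E), ∀ e, H.ends (fe e) = Sym2.map fv (G.ends e)

/-- `H` is (isomorphic to) a subgraph of `G`. -/
def IsSubgraphOf (H G : MG) : Prop :=
  ∃ (fv : H.V ↪ G.V) (fe : H.E ↪ G.E), ∀ e, G.ends (fe e) = Sym2.map fv (H.ends e)

/-- The multigraph obtained from `G` by deleting the edges `e₁, e₂` and adding a
new edge with endpoints `u, w`. -/
def splitOff (G : MG) (e₁ e₂ : G.E) (u w : G.V) (huw : u ≠ w) : MG where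
  V := G.V
  E := {e : G.E // e ≠ e₁ ∧ e ≠ e₂} ⊕ Unit
  ends := fun x => match x with
    | Sum.inl e => G.ends e.1
    | Sum.inr _ => s(u, w)
  noLoop := by
    rintro (e | e)
    · exact G.noLoop e.1
    · simpa [Sym2.mk_isDiag_iff] using huw

/-- `G'` is obtained from `G` by splitting off one pair of adjacent edges. -/
def SplitStep (G G' : MG) : Prop :=
  ∃ (e₁ e₂ : G.E) (u v w : G.V) (huw : u ≠ w),
    e₁ ≠ e₂ ∧ G.ends e₁ = s(u, v) ∧ G.ends e₂ = s(v, w) ∧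
      Iso G' (G.splitOff e₁ e₂ u w huw)

/-- `G` has an `H`-immersion: `H` can be obtained from a subgraph of `G` by
splitting off pairs of adjacent edges and removing isolated vertices. -/
def Immersion (G H : MG) : Prop :=
  ∃ G₀ G₁ : MG, G₀.IsSubgraphOf G ∧ Relation.ReflTransGen SplitStep G₀ G₁ ∧
    ∃ (fv : H.V ↪ G₁.V) (fe : H.E ≃ G₁.E),
      (∀ e, G₁.ends (fe e) = Sym2.map fv (H.ends e)) ∧
      ∀ v : G₁.V, v ∉ Set.range fv → ∀ e, v ∉ G₁.ends e

/-- A set of vertices induces a connected subgraph. -/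
def ConnIn (G : MG) (S : Set G.V) : Prop :=
  ∀ a ∈ S, ∀ b ∈ S, Relation.ReflTransGen (fun x y => x ∈ S ∧ y ∈ S ∧ G.Adjv x y) a b

/-- `G` has an `H`-minor (branch set formulation of contracting edges in a
subgraph of `G`). -/
def Minor (G H : MG) : Prop :=
  ∃ β : H.V → Set G.V,
    (∀ u, (β u).Nonempty) ∧ (∀ u, G.ConnIn (β u)) ∧
    (Pairwise fun u v => Disjoint (β u) (β v)) ∧
    ∃ η : H.E ↪ G.E, ∀ e u v, H.ends e = s(u, v) →
      ∃ a ∈ β u, ∃ b ∈ β v, G.ends (η e) = s(a, b)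

/-- `G` is a connected multigraph. -/
def Connected (G : MG) : Prop :=
  Nonempty G.V ∧ ∀ a b : G.V, Relation.ReflTransGen G.Adjv a b

/-- The degree of `v` is at least `k`. -/
def degGE (G : MG) (v : G.V) (k : ℕ) : Prop :=
  Nonempty (Fin k ↪ {e : G.E // v ∈ G.ends e})

/-- The line graph of a multigraph: a vertex for each edge, two vertices
adjacent iff the corresponding edges share an endpoint. -/
def lineGraph (G : MG) : SimpleGraph G.E where
  Adj e f := e ≠ f ∧ ∃ v, v ∈ G.ends e ∧ v ∈ G.ends f
  symm := ⟨by rintro e f ⟨h, v, h1, h2⟩; exact ⟨Ne.symm h, v, h2, h1⟩⟩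
  loopless := ⟨by rintro e ⟨h, _⟩; exact h rfl⟩

/-- `mG`: each edge of `G` is replaced by `m` parallel copies. -/
def mul (G : MG) (m : ℕ) : MG where
  V := G.V
  E := G.E × Fin m
  ends := fun p => G.ends p.1
  noLoop := fun p => G.noLoop p.1

/-- `G` has a proper edge colouring with `n` colours. -/
def EdgeColorable (G : MG) (n : ℕ) : Prop :=
  ∃ C : G.E → Fin n, ∀ e f, e ≠ f → (∃ v, v ∈ G.ends e ∧ v ∈ G.ends f) → C e ≠ C f

/-- The chromatic index of `G`. -/
noncomputable def chromIndex (G : MG) : ℕ := sInf {n | G.EdgeColorable n}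

/-- A path between edges: a nonempty sequence of distinct edges in which
consecutive edges are adjacent (this corresponds exactly to a path in the
line graph). -/
structure EPath (G : MG) where
  edges : List G.E
  ne : edges ≠ []
  nodup : edges.Nodup
  chain : edges.Chain' fun a b => ∃ v, v ∈ G.ends a ∧ v ∈ G.ends b

/-- First edge of an edge-path. -/
def EPath.firstE {G : MG} (P : EPath G) : G.E := P.edges.head P.ne

/-- Last edge of an edge-path. -/
def EPath.lastE {G : MG} (P : EPath G) : G.E := P.edges.getLast P.ne

/-- The (unordered) pair of edges `p` occurs consecutively in `P`; that is,
the corresponding 2-edge path is a subpath of `P`. -/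
def EPath.Adj2 {G : MG} (P : EPath G) (p : Sym2 G.E) : Prop :=
  ∃ l₁ a b l₂, P.edges = l₁ ++ a :: b :: l₂ ∧ p = s(a, b)

/-- A set of paths is semi-edge-disjoint: every 2-edge path is a subpath of at
most one path of the set. -/
def SED (G : MG) (S : Set (EPath G)) : Prop :=
  ∀ P ∈ S, ∀ Q ∈ S, ∀ p, P.Adj2 p → Q.Adj2 p → P = Q

/-- `H` contains `t` distinct edges and a path between each pair of them such
that this set of paths is semi-edge-disjoint. -/
def CliqueSED (H : MG) (t : ℕ) : Prop :=
  ∃ (f : Fin t ↪ H.E) (P : (i j : Fin t) → i < j → EPath H),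
    (∀ i j h, (P i j h).firstE = f i ∧ (P i j h).lastE = f j) ∧
    H.SED {Q | ∃ i j h, Q = P i j h}

/-- A path in a multigraph, recorded by its vertex sequence (without
repetitions) and edge sequence. -/
structure VPath (G : MG) where
  verts : List G.V
  edges : List G.E
  hlen : verts.length = edges.length + 1
  nodup : verts.Nodup
  hends : ∀ (i : ℕ) (h : i < edges.length),
    G.ends (edges.get ⟨i, h⟩) =
      s(verts.get ⟨i, by omega⟩, verts.get ⟨i + 1, by omega⟩)

/-- First vertex of a path. -/
def VPath.first {G : MG} (P : VPath G) : G.V :=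
  P.verts.head (by have h := P.hlen; intro hnil; rw [hnil] at h; simp at h)

/-- Last vertex of a path. -/
def VPath.last {G : MG} (P : VPath G) : G.V :=
  P.verts.getLast (by have h := P.hlen; intro hnil; rw [hnil] at h; simp at h)

/-- A cycle in a multigraph: distinct vertices `v 0, …, v (n-1)` and distinct
edges `e 0, …, e (n-1)` with `e i` joining `v i` to `v (i+1 mod n)`. -/
structure Cycle (G : MG) where
  n : ℕ
  hn : 2 ≤ n
  v : Fin n → G.V
  e : Fin n → G.E
  vinj : Function.Injective v
  einj : Function.Injective e
  hends : ∀ i : Fin n,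
    G.ends (e i) =
      s(v i, v ⟨(i.1 + 1) % n, Nat.mod_lt _ (Nat.lt_of_le_of_lt (Nat.zero_le _) i.isLt)⟩)

/-- `G` has a topological `H`-minor: branch vertices joined by internally
disjoint paths. -/
def TopMinor (G H : MG) : Prop :=
  ∃ (fv : H.V ↪ G.V) (P : H.E → VPath G),
    (∀ e, s((P e).first, (P e).last) = Sym2.map fv (H.ends e)) ∧
    (∀ e, ∀ x ∈ (P e).verts.tail.dropLast, x ∉ Set.range fv) ∧
    (∀ e f, e ≠ f → ∀ x, x ∈ (P e).verts → x ∈ (P f).verts → x ∈ Set.range fv) ∧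
    (∀ e f, e ≠ f → ∀ x ∈ (P e).edges, x ∉ (P f).edges)

/-- A set of edges spans a connected subgraph. -/
def ConnEdges (G : MG) (S : Set G.E) : Prop :=
  ∀ e ∈ S, ∀ f ∈ S,
    Relation.ReflTransGen (fun a b => a ∈ S ∧ b ∈ S ∧ ∃ v, v ∈ G.ends a ∧ v ∈ G.ends b) e f

end MG

/-- A simple graph regarded as a multigraph. -/
def SimpleGraph.toMG {V : Type} (G : SimpleGraph V) : MG where
  V := V
  E := G.edgeSet
  ends := fun e => e.1
  noLoop := fun e => G.not_isDiag_of_mem_edgeSet e.2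

/-- The complete graph `K_t` as a multigraph. -/
def completeMG (t : ℕ) : MG := (⊤ : SimpleGraph (Fin t)).toMG

/-- The graph of Figure 1: vertices `u=0, v=1, w=2, a=3, b=4, c=5`, with two
parallel edges `vw`, edge `cw`, edges `ua, ub, uc`, and edges `av, bv`. -/
def fig1 : MG where
  V := Fin 6
  E := Fin 8
  ends := ![s(1, 2), s(1, 2), s(5, 2), s(0, 3), s(0, 4), s(0, 5), s(3, 1), s(4, 1)]
  noLoop := by decide

/-!
Number the edges of `H` as `vw, vw', cw, ua, ub, uc, av, bv` (that is, `0, …, 7`). The branch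
sets `{vw}`, `{vw'}`, `{cw, uc}`, `{ua, av}`, `{ub, bv}` are connected in `L(H)`, pairwise
disjoint and pairwise adjacent, so they form a `K₅`-minor.

Taking subgraphs and splitting off pairs of edges never increases degrees, so a `K₅`-immersion
in `L(H)` would need five vertices of degree at least `4`. But an edge of `H` meets at least four
other edges only if it is incident with `v`, and there are just four such edges.
-/

namespace MG

lemma Adjv.symm {G : MG} {a b : G.V} (h : G.Adjv a b) : G.Adjv b a :=
  let ⟨e, he⟩ := h
  ⟨e, he.trans Sym2.eq_swap⟩

lemma connIn_singleton (G : MG) (a : G.V) : G.ConnIn {a} := by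
  rintro x rfl y rfl
  exact .refl

lemma connIn_pair {G : MG} {a b : G.V} (h : G.Adjv a b) : G.ConnIn {a, b} := by
  have ha : a ∈ ({a, b} : Set G.V) := Or.inl rfl
  have hb : b ∈ ({a, b} : Set G.V) := Or.inr rfl
  rintro x (rfl | rfl) y (rfl | rfl)
  · exact .refl
  · exact .single ⟨ha, hb, h⟩
  · exact .single ⟨hb, ha, h.symm⟩
  · exact .refl

/-- The edge map comes out injective for free: disjoint branch sets recover an edge of `H` from
its image. -/
lemma minor_toMG_of_branchSets {G : MG} {W : Type} {H : SimpleGraph W} (β : W → Set G.V)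
    (hne : ∀ u, (β u).Nonempty) (hconn : ∀ u, G.ConnIn (β u))
    (hdisj : Pairwise fun u v => Disjoint (β u) (β v))
    (hadj : ∀ u v, H.Adj u v → ∃ a ∈ β u, ∃ b ∈ β v, G.Adjv a b) :
    G.Minor H.toMG := by
  have hbranch : ∀ {a u u'}, a ∈ β u → a ∈ β u' → u = u' := fun ha ha' => by
    by_contra h
    exact Set.disjoint_left.1 (hdisj h) ha ha'
  have hedge : ∀ e : H.edgeSet, ∃ x : G.E, ∃ u v, e.1 = s(u, v) ∧
      ∃ a ∈ β u, ∃ b ∈ β v, G.ends x = s(a, b) := by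
    rintro ⟨e, he⟩
    induction e using Sym2.ind with
    | _ u v =>
      obtain ⟨a, ha, b, hb, x, hx⟩ := hadj u v he
      exact ⟨x, u, v, rfl, a, ha, b, hb, hx⟩
  choose η u v huv a ha b hb hab using hedge
  refine ⟨β, hne, hconn, hdisj, ⟨η, fun e e' hee => ?_⟩, fun e u' v' he => ?_⟩
  · have hs := (hab e).symm.trans ((congrArg G.ends hee).trans (hab e'))
    apply Subtype.ext
    rw [huv e, huv e']
    rcases Sym2.eq_iff.1 hs with ⟨h₁, h₂⟩ | ⟨h₁, h₂⟩
    · rw [hbranch (ha e) (h₁ ▸ ha e'), hbranch (hb e) (h₂ ▸ hb e')]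
    · rw [hbranch (ha e) (h₁ ▸ hb e'), hbranch (hb e) (h₂ ▸ ha e'), Sym2.eq_swap]
  · change e.1 = s(u', v') at he
    rcases Sym2.eq_iff.1 ((huv e).symm.trans he) with ⟨rfl, rfl⟩ | ⟨rfl, rfl⟩
    · exact ⟨a e, ha e, b e, hb e, hab e⟩
    · exact ⟨b e, hb e, a e, ha e, (hab e).trans Sym2.eq_swap⟩

def DegEmbeds (H G : MG) : Prop :=
  ∃ φ : H.V ↪ G.V, ∀ v k, H.degGE v k → G.degGE (φ v) k

lemma DegEmbeds.refl (G : MG) : G.DegEmbeds G :=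
  ⟨.refl _, fun _ _ => id⟩

lemma DegEmbeds.trans {G₁ G₂ G₃ : MG} (h₁₂ : G₁.DegEmbeds G₂) (h₂₃ : G₂.DegEmbeds G₃) :
    G₁.DegEmbeds G₃ :=
  let ⟨φ, hφ⟩ := h₁₂
  let ⟨ψ, hψ⟩ := h₂₃
  ⟨φ.trans ψ, fun v k h => hψ _ _ (hφ v k h)⟩

lemma IsSubgraphOf.degEmbeds {H G : MG} (h : H.IsSubgraphOf G) : H.DegEmbeds G := by
  obtain ⟨fv, fe, hends⟩ := h
  refine ⟨fv, fun v k ⟨d⟩ => ⟨⟨fun j => ⟨fe (d j).1, ?_⟩, fun j j' hjj => ?_⟩⟩⟩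
  · rw [hends]
    exact Sym2.mem_map.2 ⟨v, (d j).2, rfl⟩
  · exact d.injective (Subtype.ext (fe.injective (congrArg Subtype.val hjj)))

lemma Iso.isSubgraphOf {G H : MG} (h : G.Iso H) : G.IsSubgraphOf H :=
  let ⟨fv, fe, hends⟩ := h
  ⟨fv.toEmbedding, fe.toEmbedding, hends⟩

open Classical in
noncomputable def splitOffIncidentEmbedding (G : MG) {e₁ e₂ : G.E} {u w : G.V} (huw : u ≠ w)
    (hu : u ∈ G.ends e₁) (hw : w ∈ G.ends e₂) (y : G.V) :
    {x // y ∈ (G.splitOff e₁ e₂ u w huw).ends x} ↪ {e // y ∈ G.ends e} where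
  toFun
    | ⟨.inl e, h⟩ => ⟨e.1, h⟩
    | ⟨.inr _, h⟩ =>
      if h₁ : y ∈ G.ends e₁ then ⟨e₁, h₁⟩
      else ⟨e₂, by
        rcases Sym2.mem_iff.1 h with rfl | rfl
        exacts [absurd hu h₁, hw]⟩
  inj' := by
    rintro ⟨e | ⟨⟩, hx⟩ ⟨e' | ⟨⟩, hx'⟩ hee <;> dsimp only at hee
    · exact Subtype.ext (congrArg Sum.inl (Subtype.ext (Subtype.mk.inj hee)))
    · split_ifs at hee
      exacts [absurd (Subtype.mk.inj hee) e.2.1, absurd (Subtype.mk.inj hee) e.2.2]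
    · split_ifs at hee
      exacts [absurd (Subtype.mk.inj hee).symm e'.2.1, absurd (Subtype.mk.inj hee).symm e'.2.2]
    · rfl

lemma splitOff_degEmbeds (G : MG) {e₁ e₂ : G.E} {u w : G.V} (huw : u ≠ w)
    (hu : u ∈ G.ends e₁) (hw : w ∈ G.ends e₂) : (G.splitOff e₁ e₂ u w huw).DegEmbeds G :=
  ⟨.refl _, fun y _ ⟨d⟩ => ⟨d.trans (G.splitOffIncidentEmbedding huw hu hw y)⟩⟩

lemma SplitStep.degEmbeds {G G' : MG} (h : G.SplitStep G') : G'.DegEmbeds G := by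
  obtain ⟨e₁, e₂, u, v, w, huw, -, h₁, h₂, hiso⟩ := h
  refine hiso.isSubgraphOf.degEmbeds.trans (G.splitOff_degEmbeds huw ?_ ?_)
  · rw [h₁]; exact Sym2.mem_mk_left u v
  · rw [h₂]; exact Sym2.mem_mk_right v w

lemma degEmbeds_of_reflTransGen_splitStep {G₀ G₁ : MG}
    (h : Relation.ReflTransGen SplitStep G₀ G₁) : G₁.DegEmbeds G₀ := by
  induction h with
  | refl => exact .refl _
  | tail _ hstep ih => exact hstep.degEmbeds.trans ih

lemma Immersion.degEmbeds {G H : MG} (h : G.Immersion H) : H.DegEmbeds G := by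
  obtain ⟨G₀, G₁, hsub, hsplit, fv, fe, hends, -⟩ := h
  have hH : H.IsSubgraphOf G₁ := ⟨fv, fe.toEmbedding, hends⟩
  exact hH.degEmbeds.trans ((degEmbeds_of_reflTransGen_splitStep hsplit).trans hsub.degEmbeds)

end MG

lemma SimpleGraph.toMG_adjv {V : Type} (G : SimpleGraph V) {a b : V} (h : G.Adj a b) :
    G.toMG.Adjv a b :=
  ⟨⟨s(a, b), h⟩, rfl⟩

lemma SimpleGraph.le_degree_of_toMG_degGE {V : Type} (G : SimpleGraph V) {v : V}
    [Fintype (G.neighborSet v)] {k : ℕ} (h : G.toMG.degGE v k) : k ≤ G.degree v := by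
  classical
  obtain ⟨d⟩ := h
  let toIncidence : {e : G.edgeSet // v ∈ e.1} ↪ G.incidenceSet v :=
    ⟨fun e => ⟨e.1.1, e.1.2, e.2⟩, fun _ _ h => Subtype.ext (Subtype.ext (Subtype.mk.inj h))⟩
  rw [← G.card_neighborSet_eq_degree]
  simpa using Fintype.card_le_of_embedding
    ((d.trans toIncidence).trans (G.incidenceSetEquivNeighborSet v).toEmbedding)

lemma completeMG_degGE {n : ℕ} (i : Fin (n + 1)) : (completeMG (n + 1)).degGE i n := by
  refine ⟨⟨fun j => ⟨⟨s(i, i.succAbove j), ?_⟩, Sym2.mem_mk_left _ _⟩, fun j j' h => ?_⟩⟩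
  · exact (SimpleGraph.top_adj _ _).2 (Fin.succAbove_ne i j).symm
  · exact Fin.succAbove_right_injective
      (Sym2.congr_right.1 (congrArg Subtype.val (congrArg Subtype.val h)))

lemma not_immersion_completeMG {G : MG} {n : ℕ} (S : Finset G.V)
    (hS : ∀ v, G.degGE v n → v ∈ S) (hcard : S.card ≤ n) :
    ¬ G.Immersion (completeMG (n + 1)) := by
  intro h
  obtain ⟨φ, hφ⟩ := h.degEmbeds
  let ψ : Fin (n + 1) ↪ S :=
    ⟨fun i => ⟨φ i, hS _ (hφ i n (completeMG_degGE i))⟩,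
      fun _ _ h => φ.injective (Subtype.mk.inj h)⟩
  have hle := Fintype.card_le_of_embedding ψ
  rw [Fintype.card_fin, Fintype.card_coe] at hle
  omega

instance : DecidableEq fig1.V := inferInstanceAs (DecidableEq (Fin 6))
instance : Fintype fig1.V := inferInstanceAs (Fintype (Fin 6))
instance : DecidableEq fig1.E := inferInstanceAs (DecidableEq (Fin 8))
instance : Fintype fig1.E := inferInstanceAs (Fintype (Fin 8))
instance {i : ℕ} : OfNat fig1.E i := inferInstanceAs (OfNat (Fin 8) i)

instance (G : MG) [Fintype G.V] [DecidableEq G.V] [DecidableEq G.E] :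
    DecidableRel G.lineGraph.Adj :=
  fun e f => inferInstanceAs (Decidable (e ≠ f ∧ ∃ v, v ∈ G.ends e ∧ v ∈ G.ends f))

lemma fig1_lineGraph_mem_of_four_le_degree : ∀ e : fig1.E,
    4 ≤ fig1.lineGraph.degree e → e ∈ ({0, 1, 6, 7} : Finset fig1.E) := by
  decide

def fig1Branch : Fin 5 → Finset fig1.E := ![{0}, {1}, {2, 5}, {3, 6}, {4, 7}]

lemma fig1Branch_nonempty : ∀ i, (fig1Branch i).Nonempty := by
  decide

lemma fig1Branch_disjoint : ∀ i j, i ≠ j → Disjoint (fig1Branch i) (fig1Branch j) := by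
  decide

lemma fig1Branch_adj : ∀ i j, i ≠ j →
    ∃ a ∈ fig1Branch i, ∃ b ∈ fig1Branch j, fig1.lineGraph.Adj a b := by
  decide

lemma fig1Branch_connIn (i : Fin 5) :
    (SimpleGraph.toMG fig1.lineGraph).ConnIn (fig1Branch i : Set fig1.E) := by
  fin_cases i <;> simp only [fig1Branch, Fin.zero_eta, Fin.mk_one, Fin.reduceFinMk,
    Matrix.cons_val, Finset.coe_singleton, Finset.coe_insert]
  · exact MG.connIn_singleton _ _
  · exact MG.connIn_singleton _ _
  all_goals exact MG.connIn_pair (SimpleGraph.toMG_adjv _ (by decide))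

/-- `L(fig1)` has a `K₅`-minor but no `K₅`-immersion. -/
theorem fig1_K5_minor_not_immersion :
    MG.Minor (SimpleGraph.toMG fig1.lineGraph) (completeMG 5) ∧
    ¬ MG.Immersion (SimpleGraph.toMG fig1.lineGraph) (completeMG 5) := by
  constructor
  · refine MG.minor_toMG_of_branchSets (fun i => (fig1Branch i : Set fig1.E))
      (fun i => Finset.coe_nonempty.2 (fig1Branch_nonempty i)) fig1Branch_connIn
      (fun i j hij => Finset.disjoint_coe.2 (fig1Branch_disjoint i j hij)) fun i j hij => ?_
    obtain ⟨a, ha, b, hb, hab⟩ := fig1Branch_adj i j hij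
    exact ⟨a, ha, b, hb, SimpleGraph.toMG_adjv _ hab⟩
  · refine not_immersion_completeMG ({0, 1, 6, 7} : Finset fig1.E) (fun e he => ?_) le_rfl
    exact fig1_lineGraph_mem_of_four_le_degree e (fig1.lineGraph.le_degree_of_toMG_degGE he)
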